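/- arXiv:1512.00783 — 4 statements merged into one kernel-verified Lean document; each statement's English description precedes it below -/
import Mathlib

section
/- Let B and D be two orthogonal projectors on ℝ^N. Then the spectral norm of B·D equals 1, i.e. ‖BD‖₂ = 1, if and only if there exists a nonzero vector x ∈ ℝ^N with Bx = x and Dx = x (a vector perfectly localized in both vertex and frequency domains). (In all cases ‖BD‖₂ ≤ 1.) -/
/-- The spectral norm of a real `N × N` matrix: the operator norm of the induced
linear map on `ℝ^N` with the Euclidean norm. -/
noncomputable def matSpectralNorm {N : ℕ} (M : Matrix (Fin N) (Fin N) ℝ) : ℝ :=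
  ‖Matrix.toEuclideanCLM (𝕜 := ℝ) M‖

/-!
In finite dimension the operator norm of `B * D` is attained at some `x` of norm at most `1`.
If it equals `1`, the chain `1 = ‖B (D x)‖ ≤ ‖D x‖ ≤ ‖x‖ ≤ 1` collapses, and an orthogonal
projection that preserves the norm of a vector fixes it; so `D x` is a nonzero vector fixed by
both projectors. Conversely a common fixed nonzero vector is fixed by `B * D`.
-/

open Metric

namespace ContinuousLinearMap

variable {𝕜 E F : Type*} [DenselyNormedField 𝕜] [NormedAddCommGroup E] [NormedSpace 𝕜 E]
  [ProperSpace E] [SeminormedAddCommGroup F] [NormedSpace 𝕜 F]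

theorem exists_mem_closedBall_norm_apply_eq_opNorm (f : E →L[𝕜] F) :
    ∃ x ∈ closedBall (0 : E) 1, ‖f x‖ = ‖f‖ := by
  rw [← f.sSup_unitClosedBall_eq_norm]
  exact (isCompact_closedBall 0 1).image (continuous_norm.comp f.continuous)
    |>.sSup_mem ((nonempty_closedBall.mpr zero_le_one).image _)

end ContinuousLinearMap

namespace IsStarProjection

theorem norm_mul_le_one {A : Type*} [NonUnitalNormedRing A] [StarRing A] [CStarRing A] {p q : A}
    (hp : IsStarProjection p) (hq : IsStarProjection q) : ‖p * q‖ ≤ 1 :=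
  (norm_mul_le p q).trans <| mul_le_one₀ (hp.norm_le p) (norm_nonneg q) (hq.norm_le q)

variable {𝕜 E : Type*} [RCLike 𝕜] [NormedAddCommGroup E] [InnerProductSpace 𝕜 E]
  [CompleteSpace E] {p : E →L[𝕜] E}

theorem norm_apply_le (hp : IsStarProjection p) (x : E) : ‖p x‖ ≤ ‖x‖ := by
  obtain ⟨K, _, rfl⟩ := isStarProjection_iff_eq_starProjection.mp hp
  exact K.norm_starProjection_apply_le x

theorem apply_eq_self_iff_norm_apply_eq (hp : IsStarProjection p) {x : E} :
    p x = x ↔ ‖p x‖ = ‖x‖ := by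
  obtain ⟨K, _, rfl⟩ := isStarProjection_iff_eq_starProjection.mp hp
  rw [K.starProjection_eq_self_iff, K.mem_iff_norm_starProjection]

theorem norm_mul_eq_one_iff [FiniteDimensional 𝕜 E] {q : E →L[𝕜] E}
    (hp : IsStarProjection p) (hq : IsStarProjection q) :
    ‖p * q‖ = 1 ↔ ∃ x, x ≠ 0 ∧ p x = x ∧ q x = x := by
  have : ProperSpace E := FiniteDimensional.proper 𝕜 E
  constructor
  · intro hpq
    obtain ⟨x, hx_mem, hpqx⟩ := (p * q).exists_mem_closedBall_norm_apply_eq_opNorm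
    rw [hpq, mul_apply_eq_comp] at hpqx
    have hx : ‖x‖ ≤ 1 := mem_closedBall_zero_iff.mp hx_mem
    have hpq_le := hp.norm_apply_le (q x)
    have hq_le := hq.norm_apply_le x
    refine ⟨q x, fun h ↦ by simp [h] at hpqx, ?_, ?_⟩
    · exact hp.apply_eq_self_iff_norm_apply_eq.mpr (by linarith)
    · rw [← mul_apply_eq_comp, hq.isIdempotentElem.eq]
  · rintro ⟨x, hx, hpx, hqx⟩
    refine le_antisymm (hp.norm_mul_le_one hq) ?_
    have hfix : (p * q) x = x := by rw [mul_apply_eq_comp, hqx, hpx]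
    have := (p * q).le_opNorm x
    rw [hfix] at this
    exact (le_mul_iff_one_le_left (norm_pos_iff.mpr hx)).mp this

end IsStarProjection

theorem Matrix.isStarProjection_of_transpose_eq_of_mul_self_eq {n : Type*} [Fintype n]
    {B : Matrix n n ℝ} (hsym : B.transpose = B) (hidem : B * B = B) :
    IsStarProjection B :=
  ⟨hidem, by rw [IsSelfAdjoint, Matrix.star_eq_conjTranspose,
    Matrix.conjTranspose_eq_transpose_of_trivial, hsym]⟩

/-- Let `B` and `D` be orthogonal projectors on `ℝ^N`. Then `‖B·D‖₂ ≤ 1` always, and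
`‖B·D‖₂ = 1` iff there exists a nonzero vector `x` with `Bx = x` and `Dx = x`
(a vector perfectly localized in both vertex and frequency domains). -/
theorem spectral_norm_BD_eq_one_iff_perfectly_localized
    {N : ℕ} (B D : Matrix (Fin N) (Fin N) ℝ)
    (hBsym : B.transpose = B) (hDsym : D.transpose = D)
    (hBidem : B * B = B) (hDidem : D * D = D) :
    matSpectralNorm (B * D) ≤ 1 ∧
      (matSpectralNorm (B * D) = 1 ↔
        ∃ x : Fin N → ℝ, x ≠ 0 ∧ B.mulVec x = x ∧ D.mulVec x = x) := by
  have hB := (Matrix.isStarProjection_of_transpose_eq_of_mul_self_eq hBsym hBidem).map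
    (Matrix.toEuclideanCLM (n := Fin N) (𝕜 := ℝ))
  have hD := (Matrix.isStarProjection_of_transpose_eq_of_mul_self_eq hDsym hDidem).map
    (Matrix.toEuclideanCLM (n := Fin N) (𝕜 := ℝ))
  rw [matSpectralNorm, map_mul, hB.norm_mul_eq_one_iff hD]
  refine ⟨hB.norm_mul_le_one hD, ⟨?_, ?_⟩⟩
  · rintro ⟨x, hx, hBx, hDx⟩
    exact ⟨x.ofLp, by simpa using hx, congrArg WithLp.ofLp hBx, congrArg WithLp.ofLp hDx⟩
  · rintro ⟨x, hx, hBx, hDx⟩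
    exact ⟨WithLp.toLp 2 x, by simpa using hx, congrArg (WithLp.toLp 2) hBx,
      congrArg (WithLp.toLp 2) hDx⟩
end

section
/- Let B and D be two orthogonal projectors on ℝ^N and write D^c := I − D. The matrix I − D^c B is invertible if and only if there is no nonzero vector x ∈ ℝ^N with Bx = x and Dx = 0 (i.e., no nonzero bandlimited vector perfectly localized on the complement of the sampling set). -/
open Matrix

private lemma proj_dot_self {N : ℕ} (A : Matrix (Fin N) (Fin N) ℝ)
    (hs : Aᵀ = A) (hi : A * A = A) (u : Fin N → ℝ) :
    (A.mulVec u) ⬝ᵥ (A.mulVec u) = u ⬝ᵥ A.mulVec u := by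
  conv_lhs => rw [dotProduct_mulVec, ← mulVec_transpose, hs, mulVec_mulVec, hi]
  rw [dotProduct_comm, dotProduct_mulVec, ← mulVec_transpose, hs]

/-- Let `B` and `D` be orthogonal projectors on `ℝ^N`, `D^c := I − D`. The matrix
`I − D^c B` is invertible iff there is no nonzero vector `x` with `Bx = x` and `Dx = 0`
(no nonzero bandlimited vector perfectly localized on the complement of the sampling
set). -/
theorem invertibility_iff_no_localized_bandlimited_vector
    {N : ℕ} (B D : Matrix (Fin N) (Fin N) ℝ)
    (hBsym : B.transpose = B) (hDsym : D.transpose = D)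
    (hBidem : B * B = B) (hDidem : D * D = D) :
    IsUnit (1 - (1 - D) * B) ↔
      ¬∃ x : Fin N → ℝ, x ≠ 0 ∧ B.mulVec x = x ∧ D.mulVec x = 0 := by
  rw [Matrix.isUnit_iff_isUnit_det, isUnit_iff_ne_zero, Ne,
    ← Matrix.exists_mulVec_eq_zero_iff]
  constructor
  · rintro h ⟨x, hx0, hBx, hDx⟩
    refine h ⟨x, hx0, ?_⟩
    rw [Matrix.sub_mulVec, Matrix.one_mulVec, ← Matrix.mulVec_mulVec, hBx,
      Matrix.sub_mulVec, Matrix.one_mulVec, hDx, sub_zero, sub_self]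
  · rintro h ⟨x, hx0, hMx⟩
    apply h
    set y := B.mulVec x with hy
    have hP : (1 - D)ᵀ = 1 - D := by simp [transpose_sub, hDsym]
    have hPi : (1 - D) * (1 - D) = 1 - D := by
      simp [sub_mul, mul_sub, hDidem]
    have hxy : x = (1 - D).mulVec y := by
      have h' := hMx
      rw [Matrix.sub_mulVec, Matrix.one_mulVec, sub_eq_zero] at h'
      rw [h', ← Matrix.mulVec_mulVec]
    have e1 : x ⬝ᵥ x = y ⬝ᵥ x := by
      calc x ⬝ᵥ x = ((1-D).mulVec y) ⬝ᵥ ((1-D).mulVec y) := by rw [← hxy]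
        _ = y ⬝ᵥ ((1-D).mulVec y) := proj_dot_self _ hP hPi y
        _ = y ⬝ᵥ x := by rw [← hxy]
    have e2 : y ⬝ᵥ y = x ⬝ᵥ y := proj_dot_self B hBsym hBidem x
    have e3 : (y - x) ⬝ᵥ (y - x) = 0 := by
      have hc : x ⬝ᵥ y = y ⬝ᵥ x := dotProduct_comm x y
      simp only [sub_dotProduct, dotProduct_sub]
      rw [e2, e1, hc]; ring
    have hyx : y = x := sub_eq_zero.mp ((dotProduct_self_eq_zero).mp e3)
    have hBx : B.mulVec x = x := by rw [← hy, hyx]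
    have hDx : D.mulVec x = 0 := by
      have := hxy
      rw [hyx, Matrix.sub_mulVec, Matrix.one_mulVec] at this
      exact sub_eq_self.mp this.symm
    exact ⟨x, hx0, hBx, hDx⟩
end

section
/- Let B and D be two orthogonal projectors on ℝ^N and write B^c := I − B, D^c := I − D. Then there exists no nonzero bandlimited vector x (Bx = x) with Dx = 0 — equivalently, every bandlimited signal is uniquely determined by its samples Df — if and only if rank(D^c) = rank(B^c D^c). -/
open Matrix

lemma aux_finrank_map_eq_iff {N : ℕ} (f : (Fin N → ℝ) →ₗ[ℝ] (Fin N → ℝ))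
    (p : Submodule ℝ (Fin N → ℝ)) :
    Module.finrank ℝ p = Module.finrank ℝ (p.map f) ↔
      ∀ x ∈ p, f x = 0 → x = 0 := by
  have hrn := LinearMap.finrank_range_add_finrank_ker (f.domRestrict p)
  rw [LinearMap.range_domRestrict] at hrn
  constructor
  · intro h x hx hfx
    have hker : Module.finrank ℝ (LinearMap.ker (f.domRestrict p)) = 0 := by omega
    rw [Submodule.finrank_eq_zero] at hker
    have : (⟨x, hx⟩ : p) ∈ LinearMap.ker (f.domRestrict p) := by
      simp [LinearMap.mem_ker, LinearMap.domRestrict_apply, hfx]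
    rw [hker] at this
    simpa using congrArg Subtype.val this
  · intro h
    have hker : LinearMap.ker (f.domRestrict p) = ⊥ := by
      rw [LinearMap.ker_eq_bot']
      rintro ⟨x, hx⟩ hfx
      have : f x = 0 := by simpa [LinearMap.domRestrict_apply] using hfx
      exact Subtype.ext (h x hx this)
    rw [hker] at hrn
    simpa using hrn.symm

/-- Let `B` and `D` be orthogonal projectors on `ℝ^N`, `B^c := I − B`, `D^c := I − D`.
There exists no nonzero bandlimited vector `x` (`Bx = x`) with `Dx = 0` — equivalently,
every bandlimited signal is uniquely determined by its samples `Df` — iff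
`rank D^c = rank (B^c D^c)`. -/
theorem no_localized_bandlimited_iff_rank_condition
    {N : ℕ} (B D : Matrix (Fin N) (Fin N) ℝ)
    (hBsym : B.transpose = B) (hDsym : D.transpose = D)
    (hBidem : B * B = B) (hDidem : D * D = D) :
    (¬∃ x : Fin N → ℝ, x ≠ 0 ∧ B.mulVec x = x ∧ D.mulVec x = 0) ↔
      (1 - D).rank = ((1 - B) * (1 - D)).rank := by
  classical
  set f := ((1 - B : Matrix (Fin N) (Fin N) ℝ)).mulVecLin with hf
  set p := LinearMap.range ((1 - D : Matrix (Fin N) (Fin N) ℝ).mulVecLin) with hp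
  have hmem : ∀ x : Fin N → ℝ, (x ∈ p ∧ f x = 0) ↔ (B.mulVec x = x ∧ D.mulVec x = 0) := by
    intro x
    have hfx : f x = x - B.mulVec x := by
      simp [hf, Matrix.mulVecLin_apply, Matrix.sub_mulVec, Matrix.one_mulVec]
    constructor
    · rintro ⟨⟨y, rfl⟩, hfx0⟩
      have hy : (1 - D : Matrix (Fin N) (Fin N) ℝ).mulVecLin y = y - D.mulVec y := by
        simp [Matrix.mulVecLin_apply, Matrix.sub_mulVec, Matrix.one_mulVec]
      rw [hfx] at hfx0
      refine ⟨(sub_eq_zero.mp hfx0).symm, ?_⟩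
      rw [hy, Matrix.mulVec_sub, Matrix.mulVec_mulVec, hDidem, sub_self]
    · rintro ⟨hB, hD⟩
      refine ⟨⟨x, ?_⟩, ?_⟩
      · simp [Matrix.mulVecLin_apply, Matrix.sub_mulVec, Matrix.one_mulVec, hD]
      · rw [hfx, hB, sub_self]
  rw [Matrix.rank, Matrix.rank, Matrix.mulVecLin_mul, LinearMap.range_comp, ← hp, ← hf,
    aux_finrank_map_eq_iff f p]
  constructor
  · intro h x hx hfx
    by_contra hne
    exact h ⟨x, hne, ((hmem x).mp ⟨hx, hfx⟩).1, ((hmem x).mp ⟨hx, hfx⟩).2⟩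
  · rintro h ⟨x, hne, hBx, hDx⟩
    have := (hmem x).mpr ⟨hBx, hDx⟩
    exact hne (h x this.1 this.2)
end

section
/- Let B and D be two orthogonal projectors on ℝ^N with ‖B D^c‖₂ < 1, where D^c := I − D. If Bx = x and B·D·B·x = 0, then x = 0. Equivalently, no eigenvector of B·D·B associated with the eigenvalue 0 is bandlimited, and rank(B·D·B) = rank(B), so the eigenvectors of B·D·B with nonzero eigenvalues span the range of B. -/
open Matrix

theorem Matrix.rank_eq_of_ker_mulVecLin_eq {K m n : Type*} [Field K] [Fintype m] [Fintype n]
    {A C : Matrix m n K} (h : LinearMap.ker A.mulVecLin = LinearMap.ker C.mulVecLin) :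
    A.rank = C.rank := by
  have hA := LinearMap.finrank_range_add_finrank_ker A.mulVecLin
  have hC := LinearMap.finrank_range_add_finrank_ker C.mulVecLin
  rw [h] at hA
  exact Nat.add_right_cancel (hA.trans hC.symm)

theorem eq_zero_of_mulVec_eq_self_of_matSpectralNorm_lt_one {N : ℕ}
    {M : Matrix (Fin N) (Fin N) ℝ} (hM : matSpectralNorm M < 1) {x : Fin N → ℝ}
    (hx : M *ᵥ x = x) : x = 0 := by
  set y : EuclideanSpace ℝ (Fin N) := WithLp.toLp 2 x
  have hy : ‖y‖ ≤ matSpectralNorm M * ‖y‖ := by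
    calc ‖y‖ = ‖toEuclideanCLM (𝕜 := ℝ) M y‖ := by rw [toEuclideanCLM_toLp, hx]
      _ ≤ matSpectralNorm M * ‖y‖ := (toEuclideanCLM (𝕜 := ℝ) M).le_opNorm y
  have hy0 : ‖y‖ = 0 := by nlinarith [norm_nonneg y]
  simpa [y] using hy0

theorem Matrix.mul_mul_eq_transpose_mul_self {n R : Type*} [Fintype n] [CommSemiring R]
    {B D : Matrix n n R} (hBsym : Bᵀ = B) (hDsym : Dᵀ = D) (hDidem : D * D = D) :
    B * D * B = (D * B)ᵀ * (D * B) := by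
  rw [transpose_mul, hBsym, hDsym, ← Matrix.mul_assoc, Matrix.mul_assoc B D D, hDidem]

section Projectors

variable {N : ℕ} {B D : Matrix (Fin N) (Fin N) ℝ}

theorem eq_zero_of_bandlimited_of_mulVec_eq_zero (hBsym : Bᵀ = B) (hDsym : Dᵀ = D)
    (hDidem : D * D = D) (hnorm : matSpectralNorm (B * (1 - D)) < 1) {x : Fin N → ℝ}
    (hBx : B *ᵥ x = x) (hx : (B * D * B) *ᵥ x = 0) : x = 0 := by
  have hDBx : (D * B) *ᵥ x = 0 := by
    rw [mul_mul_eq_transpose_mul_self hBsym hDsym hDidem] at hx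
    exact (ker_mulVecLin_transpose_mul_self (D * B)).le hx
  have hDx : D *ᵥ x = 0 := by rwa [← mulVec_mulVec, hBx] at hDBx
  refine eq_zero_of_mulVec_eq_self_of_matSpectralNorm_lt_one hnorm ?_
  rw [← mulVec_mulVec, sub_mulVec, one_mulVec, hDx, sub_zero, hBx]

theorem ker_mulVecLin_mul_mul_eq (hBsym : Bᵀ = B) (hDsym : Dᵀ = D) (hBidem : B * B = B)
    (hDidem : D * D = D) (hnorm : matSpectralNorm (B * (1 - D)) < 1) :
    LinearMap.ker (B * D * B).mulVecLin = LinearMap.ker B.mulVecLin := by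
  ext x
  simp only [LinearMap.mem_ker, mulVecLin_apply]
  constructor
  · intro hx
    refine eq_zero_of_bandlimited_of_mulVec_eq_zero hBsym hDsym hDidem hnorm ?_ ?_
    · rw [mulVec_mulVec, hBidem]
    · rw [mulVec_mulVec, Matrix.mul_assoc, hBidem, hx]
  · intro hx
    rw [← mulVec_mulVec, hx, mulVec_zero]

end Projectors

/-- Let `B` and `D` be orthogonal projectors on `ℝ^N` with `‖B D^c‖₂ < 1`, `D^c := I − D`.
If `Bx = x` and `B·D·B·x = 0` then `x = 0`: no eigenvector of `B·D·B` with eigenvalue `0`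
is bandlimited. Moreover `rank (B·D·B) = rank B`, so the eigenvectors of `B·D·B` with
nonzero eigenvalues span the range of `B`. -/
theorem no_bandlimited_kernel_vector_and_rank
    {N : ℕ} (B D : Matrix (Fin N) (Fin N) ℝ)
    (hBsym : B.transpose = B) (hDsym : D.transpose = D)
    (hBidem : B * B = B) (hDidem : D * D = D)
    (hnorm : matSpectralNorm (B * (1 - D)) < 1) :
    (∀ x : Fin N → ℝ, B.mulVec x = x → (B * D * B).mulVec x = 0 → x = 0) ∧
      (B * D * B).rank = B.rank :=
  ⟨fun _ hBx hx => eq_zero_of_bandlimited_of_mulVec_eq_zero hBsym hDsym hDidem hnorm hBx hx,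
    rank_eq_of_ker_mulVecLin_eq (ker_mulVecLin_mul_mul_eq hBsym hDsym hBidem hDidem hnorm)⟩
end
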